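/- Let a ≥ 1 and n ≥ 2 be integers and let F̄an_n be the modified fan graph: the path graph P_n with vertices p₁, …, p_n together with one new vertex p joined to each p_i by a parallel edges. Then t(F̄an_n) = a·B_{n−1}(a), where B_m(x) = Σ_{k=0}^{m} C(m+k+1, m−k)·x^k is the m-th Morgan–Voyce polynomial. In particular, when a = 1, t(Fan_n) = F_{2n}, the (2n)-th Fibonacci number. -/

import Mathlib

open scoped Classical

/-- A finite weighted multigraph (resistive electrical network): finitely many
vertices and edges; each edge `e` has two endpoints `ends e` and a positive
length (resistance) `len e`.  Multiple edges and self-loops are allowed. -/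
structure WMG where
  V : Type
  E : Type
  instV : Fintype V
  instE : Fintype E
  ends : E → V × V
  len : E → ℝ
  len_pos : ∀ e, 0 < len e

attribute [instance] WMG.instV WMG.instE

/-- The Moore–Penrose pseudoinverse of a real square matrix, characterized by
the four Penrose equations (it exists and is unique for real matrices). -/
noncomputable def Matrix.mpinv {n : Type} [Fintype n] (A : Matrix n n ℝ) : Matrix n n ℝ :=
  if h : ∃ B : Matrix n n ℝ,
      A * B * A = A ∧ B * A * B = B ∧ Matrix.transpose (A * B) = A * B ∧ Matrix.transpose (B * A) = B * A
  then h.choose else 0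

namespace WMG

/-- Indicator function. -/
noncomputable def ind {α : Type} (x y : α) : ℝ := if x = y then 1 else 0

/-- The weighted Laplacian: an edge `e` with endpoints `a, b` contributes
`(1/len e) * (δ_{ua} - δ_{ub}) * (δ_{va} - δ_{vb})` to the `(u,v)` entry.  So
the off-diagonal `(u,v)` entry is `-∑ 1/len e` over the edges joining `u` and
`v`, and all row sums are zero. -/
noncomputable def lap (G : WMG) : Matrix G.V G.V ℝ :=
  ∑ e : G.E, (G.len e)⁻¹ •
    Matrix.of (fun u v : G.V =>
      (ind u (G.ends e).1 - ind u (G.ends e).2) *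
      (ind v (G.ends e).1 - ind v (G.ends e).2))

/-- Effective resistance `r(p,q) = L⁺pp - 2·L⁺pq + L⁺qq`. -/
noncomputable def res (G : WMG) (p q : G.V) : ℝ :=
  G.lap.mpinv p p - 2 * G.lap.mpinv p q + G.lap.mpinv q q

/-- Voltage function `j_p(q,s) = L⁺pp - L⁺pq - L⁺ps + L⁺qs`. -/
noncomputable def volt (G : WMG) (p q s : G.V) : ℝ :=
  G.lap.mpinv p p - G.lap.mpinv p q - G.lap.mpinv p s + G.lap.mpinv q s

/-- Two vertices are adjacent if some edge has them as its endpoints. -/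
def Adj (G : WMG) (u v : G.V) : Prop :=
  ∃ e : G.E, G.ends e = (u, v) ∨ G.ends e = (v, u)

/-- `u` and `v` are joined by a walk in `G`. -/
def Reach (G : WMG) (u v : G.V) : Prop := Relation.ReflTransGen G.Adj u v

/-- `G` is connected. -/
def Connected (G : WMG) : Prop := Nonempty G.V ∧ ∀ u v : G.V, G.Reach u v

/-- Quotient graph: identify vertices along (the equivalence generated by) the
relation `r`; all edges are kept. -/
noncomputable def quot (G : WMG) (r : G.V → G.V → Prop) : WMG where
  V := Quot r
  E := G.E
  instV := Fintype.ofFinite _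
  instE := G.instE
  ends e := (Quot.mk r (G.ends e).1, Quot.mk r (G.ends e).2)
  len := G.len
  len_pos := G.len_pos

/-- The canonical map from the vertices of `G` to those of a quotient of `G`. -/
def quotMap (G : WMG) (r : G.V → G.V → Prop) : G.V → (G.quot r).V := Quot.mk r

/-- `G_{pq}`: identify the vertices `p` and `q`. -/
noncomputable def ident2 (G : WMG) (p q : G.V) : WMG :=
  G.quot (fun x y => x = p ∧ y = q)

def ident2Map (G : WMG) (p q : G.V) : G.V → (G.ident2 p q).V :=
  G.quotMap _

/-- `G_{pqs}`: identify the vertices `p`, `q`, `s` into a single vertex. -/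
noncomputable def ident3 (G : WMG) (p q s : G.V) : WMG :=
  G.quot (fun x y => (x = p ∧ y = q) ∨ (x = p ∧ y = s))

/-- `G_{pq,st}`: identify `p` with `q` and, separately, `s` with `t`. -/
noncomputable def ident22 (G : WMG) (p q s t : G.V) : WMG :=
  G.quot (fun x y => (x = p ∧ y = q) ∨ (x = s ∧ y = t))

/-- `G_S`: identify all vertices in the set `S` into a single vertex. -/
noncomputable def identSet (G : WMG) (S : Set G.V) : WMG :=
  G.quot (fun x y => x ∈ S ∧ y ∈ S)

/-- `G − e`: delete the edge `e` (keeping all vertices). -/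
noncomputable def delete (G : WMG) (e : G.E) : WMG where
  V := G.V
  E := {f : G.E // f ≠ e}
  instV := G.instV
  instE := Fintype.ofFinite _
  ends f := G.ends f.1
  len f := G.len f.1
  len_pos f := G.len_pos f.1

/-- `e` is a bridge if `G − e` is disconnected. -/
def IsBridge (G : WMG) (e : G.E) : Prop := ¬ (G.delete e).Connected

/-- `Ḡ_e`: contract the edge `e` (identify its endpoints and delete it). -/
noncomputable def contract (G : WMG) (e : G.E) : WMG :=
  (G.delete e).quot (fun x y => x = (G.ends e).1 ∧ y = (G.ends e).2)

def contractMap (G : WMG) (e : G.E) : G.V → (G.contract e).V := Quot.mk _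

/-- Replace the length of the edge `e` by `L'`. -/
noncomputable def setLen (G : WMG) (e : G.E) (L' : ℝ) (hL' : 0 < L') : WMG where
  V := G.V
  E := G.E
  instV := G.instV
  instE := G.instE
  ends := G.ends
  len f := if f = e then L' else G.len f
  len_pos f := by
    by_cases hf : f = e
    · simpa [hf] using hL'
    · simpa [hf] using G.len_pos f

/-- `T` is (the edge set of) a spanning tree of `G`: using only edges of `T`
any two vertices are joined, and `T` has (number of vertices) − 1 edges. -/
def IsSpanningTree (G : WMG) (T : Finset G.E) : Prop :=
  (∀ u v : G.V, Relation.ReflTransGen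
      (fun x y => ∃ e ∈ T, G.ends e = (x, y) ∨ G.ends e = (y, x)) u v) ∧
  T.card = Fintype.card G.V - 1

/-- `t G`: the number of spanning trees of `G` (equals `1` for a one-vertex
graph; self-loops contribute nothing). -/
noncomputable def t (G : WMG) : ℕ := Nat.card {T : Finset G.E // G.IsSpanningTree T}

/-- `t(G_{pq})`, with the convention `t(G_{pp}) = 0`. -/
noncomputable def t2 (G : WMG) (p q : G.V) : ℕ :=
  if p = q then 0 else (G.ident2 p q).t

/-- Disjoint union of two graphs. -/
noncomputable def disjUnion (G₁ G₂ : WMG) : WMG where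
  V := G₁.V ⊕ G₂.V
  E := G₁.E ⊕ G₂.E
  instV := inferInstance
  instE := inferInstance
  ends := Sum.elim (fun e => (Sum.inl (G₁.ends e).1, Sum.inl (G₁.ends e).2))
                   (fun e => (Sum.inr (G₂.ends e).1, Sum.inr (G₂.ends e).2))
  len := Sum.elim G₁.len G₂.len
  len_pos := by
    rintro (e | e)
    · exact G₁.len_pos e
    · exact G₂.len_pos e

/-- Glue `G₁` and `G₂` along two pairs of vertices (`p₁ ↔ p₂`, `q₁ ↔ q₂`):
the result is the graph `G = G₁ ∪ G₂` with `G₁ ∩ G₂ = {p, q}` (the two pieces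
share exactly these two vertices and no edges). -/
noncomputable def glue2 (G₁ G₂ : WMG) (p₁ q₁ : G₁.V) (p₂ q₂ : G₂.V) : WMG :=
  (G₁.disjUnion G₂).quot (fun x y =>
    (x = Sum.inl p₁ ∧ y = Sum.inr p₂) ∨ (x = Sum.inl q₁ ∧ y = Sum.inr q₂))

/-- Glue `G₁` and `G₂` along three pairs of vertices: the result is the graph
`G = G₁ ∪ G₂` with `G₁ ∩ G₂ = {p, q, s}`. -/
noncomputable def glue3 (G₁ G₂ : WMG) (p₁ q₁ s₁ : G₁.V) (p₂ q₂ s₂ : G₂.V) : WMG :=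
  (G₁.disjUnion G₂).quot (fun x y =>
    (x = Sum.inl p₁ ∧ y = Sum.inr p₂) ∨ (x = Sum.inl q₁ ∧ y = Sum.inr q₂) ∨
    (x = Sum.inl s₁ ∧ y = Sum.inr s₂))

/-- Disjoint union of a finite family of graphs. -/
noncomputable def sigmaGraph {k : ℕ} (G : Fin k → WMG) : WMG where
  V := Σ i, (G i).V
  E := Σ i, (G i).E
  instV := inferInstance
  instE := inferInstance
  ends e := (⟨e.1, ((G e.1).ends e.2).1⟩, ⟨e.1, ((G e.1).ends e.2).2⟩)
  len e := (G e.1).len e.2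
  len_pos e := (G e.1).len_pos e.2

/-- Glue the family `G i` along a common pair of vertices (all the `p i` are
identified together, and all the `q i` are identified together): the result is
`G = ⋃ G_i` with `G_i ∩ G_j = {p, q}` for all `i ≠ j`. -/
noncomputable def glueFam {k : ℕ} (G : Fin k → WMG) (p q : ∀ i, (G i).V) : WMG :=
  (sigmaGraph G).quot (fun x y =>
    (∃ i j, x = ⟨i, p i⟩ ∧ y = ⟨j, p j⟩) ∨ (∃ i j, x = ⟨i, q i⟩ ∧ y = ⟨j, q j⟩))

/-- The cyclic successor on `Fin k`. -/
def finSucc {k : ℕ} (i : Fin k) : Fin k :=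
  ⟨(i.1 + 1) % k, Nat.mod_lt _ (Nat.lt_of_le_of_lt (Nat.zero_le _) i.2)⟩

/-- `CG_k`: replace the `i`-th edge of the cycle `C_k` by the graph `G i`,
identifying `t i` (of `G i`) with `s (i+1)` (of `G (i+1)`), cyclically. -/
noncomputable def cycleGlue {k : ℕ} (G : Fin k → WMG) (s t : ∀ i, (G i).V) : WMG :=
  (sigmaGraph G).quot (fun x y =>
    ∃ i, x = ⟨i, t i⟩ ∧ y = ⟨finSucc i, s (finSucc i)⟩)

/-- Join a new vertex `u` (the vertex `none`) to the vertex `p i` of `H` by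
`a i` parallel unit edges, for each `i`.  The resulting graph `G` has `H = G − u`,
and if `p` is injective with all `a i ≥ 1` then `N_G(u) = {p 1, …, p n}` with
`a i` parallel edges joining `u` to `p i`. -/
noncomputable def cone (H : WMG) {n : ℕ} (p : Fin n → H.V) (a : Fin n → ℕ) : WMG where
  V := Option H.V
  E := H.E ⊕ (Σ i : Fin n, Fin (a i))
  instV := inferInstance
  instE := inferInstance
  ends := Sum.elim (fun e => (some (H.ends e).1, some (H.ends e).2))
                   (fun e => (none, some (p e.1)))
  len := Sum.elim H.len (fun _ => 1)
  len_pos := by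
    rintro (e | e)
    · exact H.len_pos e
    · exact one_pos

/-- The path graph `P_n` on `n` vertices `0, 1, …, n-1`, unit edge lengths. -/
noncomputable def path (n : ℕ) : WMG where
  V := Fin n
  E := Fin (n - 1)
  instV := inferInstance
  instE := inferInstance
  ends i := (⟨i.1, by have := i.2; omega⟩, ⟨i.1 + 1, by have := i.2; omega⟩)
  len _ := 1
  len_pos _ := one_pos

/-- The cycle graph `C_n` on `n` vertices, unit edge lengths. -/
noncomputable def cycle (n : ℕ) : WMG where
  V := Fin n
  E := Fin n
  instV := inferInstance
  instE := inferInstance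
  ends i := (i, finSucc i)
  len _ := 1
  len_pos _ := one_pos

/-- The modified fan graph `F̄an_n`: the path `P_n` together with one new hub
vertex joined to each path vertex by `a` parallel edges. -/
noncomputable def fanGraph (n a : ℕ) : WMG :=
  (path n).cone (fun i : Fin n => i) (fun _ => a)

/-- The modified wheel graph `W̄_n`: the cycle `C_n` together with one new hub
vertex joined to each cycle vertex by `a` parallel edges. -/
noncomputable def wheelGraph (n a : ℕ) : WMG :=
  (cycle n).cone (fun i : Fin n => i) (fun _ => a)

end WMG

/-- The Morgan–Voyce polynomial `B_m(x) = ∑_{k=0}^m C(m+k+1, m−k) x^k`. -/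
noncomputable def morganVoyce (m : ℕ) (x : ℝ) : ℝ :=
  ∑ k ∈ Finset.range (m + 1), (Nat.choose (m + k + 1) (m - k) : ℝ) * x ^ k

/-- The polynomial `W_m(x) = ∑_{k=0}^m ((2m+2)/(m+2+k)) C(m+2+k, m−k) x^k`. -/
noncomputable def wheelPoly (m : ℕ) (x : ℝ) : ℝ :=
  ∑ k ∈ Finset.range (m + 1),
    ((2 * m + 2 : ℝ) / (m + 2 + k : ℝ)) * (Nat.choose (m + 2 + k) (m - k) : ℝ) * x ^ k

/-- The Lucas numbers: `L₀ = 2`, `L₁ = 1`, `L_{m+2} = L_m + L_{m+1}`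
(so `L₂ = 3`). -/
def lucas : ℕ → ℕ
  | 0 => 2
  | 1 => 1
  | n + 2 => lucas n + lucas (n + 1)
/-! Orient a spanning tree towards the hub. Every path vertex `i` then leaves along exactly one
edge: a hub edge at `i`, or the path edge to `i + 1` ("right") or to `i - 1` ("left"). This
identifies spanning trees with words of length `n` over `a + 2` letters that do not start with
"left", do not end with "right" and never have "right" followed by "left". Counting such words
letter by letter, according to whether the last letter is "right", gives a pair of linear
recursions solved by `a ⬝ B_{n-1}(a)` through the Morgan–Voyce recurrence
`B_{m+2} = (x + 2) B_{m+1} - B_m`; for `a = 1` they are the Fibonacci recursions. -/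

open Finset Relation

theorem Nat.choose_add_two_add_choose (n r : ℕ) :
    (n + 2).choose (r + 2) + n.choose (r + 2) = 2 * (n + 1).choose (r + 2) + n.choose r := by
  simp only [Nat.choose_succ_succ]
  ring

theorem morganVoyce_eq_sum_choose {m N : ℕ} (hN : m < N) (x : ℝ) :
    morganVoyce m x = ∑ k ∈ range N, ((m + k + 1).choose (2 * k + 1) : ℝ) * x ^ k := by
  rw [morganVoyce, ← sum_range_add_sum_Ico _ hN, sum_eq_zero (s := Ico _ _), add_zero]
  · refine sum_congr rfl fun k hk => ?_
    rw [mem_range] at hk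
    rw [show m - k = m + k + 1 - (2 * k + 1) by omega, Nat.choose_symm (by omega)]
  · intro k hk
    rw [mem_Ico] at hk
    rw [Nat.choose_eq_zero_of_lt (by omega), Nat.cast_zero, zero_mul]

theorem morganVoyce_add_two (m : ℕ) (x : ℝ) :
    morganVoyce (m + 2) x + morganVoyce m x = (x + 2) * morganVoyce (m + 1) x := by
  set c : ℕ → ℕ → ℝ := fun j k => ((j + k + 1).choose (2 * k + 1) : ℝ)
  have hB : ∀ j ≤ m + 2,
      morganVoyce j x = ∑ k ∈ range (m + 2), c j (k + 1) * x ^ (k + 1) + (j + 1) := by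
    intro j hj
    rw [morganVoyce_eq_sum_choose (N := m + 3) (by omega), sum_range_succ']
    simp [c]
  have hxB : x * morganVoyce (m + 1) x = ∑ k ∈ range (m + 2), c (m + 1) k * x ^ (k + 1) := by
    rw [morganVoyce_eq_sum_choose (N := m + 2) (by omega), mul_sum]
    exact sum_congr rfl fun k _ => by ring
  have hcoeff : ∀ k, c (m + 2) (k + 1) + c m (k + 1) = c (m + 1) k + 2 * c (m + 1) (k + 1) := by
    intro k
    have h := Nat.choose_add_two_add_choose (m + k + 2) (2 * k + 1)
    simp only [c]
    rw [show m + 2 + (k + 1) + 1 = m + k + 2 + 2 by ring, show m + (k + 1) + 1 = m + k + 2 by ring,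
      show m + 1 + k + 1 = m + k + 2 by ring, show m + 1 + (k + 1) + 1 = m + k + 2 + 1 by ring,
      show 2 * (k + 1) + 1 = 2 * k + 1 + 2 by ring]
    exact_mod_cast h.trans (add_comm _ _)
  have hsum : ∑ k ∈ range (m + 2), c (m + 2) (k + 1) * x ^ (k + 1) +
      ∑ k ∈ range (m + 2), c m (k + 1) * x ^ (k + 1) =
      x * morganVoyce (m + 1) x + 2 * ∑ k ∈ range (m + 2), c (m + 1) (k + 1) * x ^ (k + 1) := by
    rw [hxB, mul_sum, ← sum_add_distrib, ← sum_add_distrib]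
    exact sum_congr rfl fun k _ => by rw [← add_mul, hcoeff]; ring
  rw [hB (m + 2) le_rfl, hB m (by omega)]
  linear_combination (norm := (push_cast; ring)) hsum - 2 * hB (m + 1) (by omega)

theorem morganVoyce_zero (x : ℝ) : morganVoyce 0 x = 1 := by
  simp [morganVoyce]

theorem morganVoyce_one (x : ℝ) : morganVoyce 1 x = x + 2 := by
  simp [morganVoyce, sum_range_succ, add_comm]

theorem card_filter_snoc {β : Type*} [Fintype β] {n : ℕ} (Q : (Fin (n + 1) → β) → Prop) :
    #{f | Q f} = ∑ g : Fin n → β, #{x | Q (Fin.snoc g x)} := by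
  simp only [card_filter]
  rw [← (Fin.snocEquiv fun _ => β).sum_comp, Fintype.sum_prod_type_right]
  rfl

namespace FanCode

variable {a m : ℕ}

/- A word `f` lists, for each path vertex `i`, the edge along which `i` leaves towards the hub:
`inl j` is its `j`-th hub edge, `inr true` the path edge to `i + 1`, `inr false` the one to
`i - 1`. -/

def IsCodePrefix (f : Fin (m + 1) → Fin a ⊕ Bool) : Prop :=
  f 0 ≠ .inr false ∧ ∀ k : Fin m, ¬(f k.castSucc = .inr true ∧ f k.succ = .inr false)

def IsCode (f : Fin (m + 1) → Fin a ⊕ Bool) : Prop :=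
  IsCodePrefix f ∧ f (Fin.last m) ≠ .inr true

def IsOpenPrefix (f : Fin (m + 1) → Fin a ⊕ Bool) : Prop :=
  IsCodePrefix f ∧ f (Fin.last m) = .inr true

variable (a m) in
noncomputable def numCodes : ℕ := #{f : Fin (m + 1) → Fin a ⊕ Bool | IsCode f}

variable (a m) in
noncomputable def numOpenPrefixes : ℕ := #{f : Fin (m + 1) → Fin a ⊕ Bool | IsOpenPrefix f}

theorem isCodePrefix_snoc (g : Fin (m + 1) → Fin a ⊕ Bool) (x : Fin a ⊕ Bool) :
    IsCodePrefix (Fin.snoc g x : Fin (m + 2) → _) ↔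
      IsCodePrefix g ∧ ¬(g (Fin.last m) = .inr true ∧ x = .inr false) := by
  have h0 : (Fin.snoc g x : Fin (m + 2) → _) 0 = g 0 := Fin.snoc_castSucc (i := 0) ..
  simp only [IsCodePrefix, Fin.forall_fin_succ', Fin.snoc_castSucc, Fin.succ_castSucc,
    Fin.succ_last, Fin.snoc_last, h0, and_assoc]

theorem card_ne_right : #{x : Fin a ⊕ Bool | x ≠ .inr true} = a + 1 := by
  rw [card_filter]
  simp

theorem card_ne_left_ne_right : #{x : Fin a ⊕ Bool | x ≠ .inr false ∧ x ≠ .inr true} = a := by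
  have : ({x | x ≠ .inr false ∧ x ≠ .inr true} : Finset (Fin a ⊕ Bool)) = univ.map .inl := by
    ext (x | _ | _) <;> simp
  rw [this, card_map, card_univ, Fintype.card_fin]

theorem numCodes_zero : numCodes a 0 = a := by
  rw [numCodes, card_filter_snoc]
  simp [IsCode, IsCodePrefix, Fin.snoc, card_ne_left_ne_right]

theorem numOpenPrefixes_zero : numOpenPrefixes a 0 = 1 := by
  refine card_eq_one.2 ⟨fun _ => .inr true, ?_⟩
  ext f
  simp +contextual [IsOpenPrefix, IsCodePrefix, funext_iff, Fin.forall_fin_one]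

theorem card_isCode_snoc (g : Fin (m + 1) → Fin a ⊕ Bool) :
    #{x | IsCode (Fin.snoc g x : Fin (m + 2) → _)} =
      (a + 1) * (if IsCode g then 1 else 0) + a * (if IsOpenPrefix g then 1 else 0) := by
  by_cases hg : IsCodePrefix g
  · by_cases hlast : g (Fin.last m) = .inr true
    · simp [IsCode, IsOpenPrefix, isCodePrefix_snoc, hg, hlast, card_ne_left_ne_right]
    · simp [IsCode, IsOpenPrefix, isCodePrefix_snoc, hg, hlast, card_ne_right]
  · simp [IsCode, IsOpenPrefix, isCodePrefix_snoc, hg]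

theorem isOpenPrefix_snoc (g : Fin (m + 1) → Fin a ⊕ Bool) (x : Fin a ⊕ Bool) :
    IsOpenPrefix (Fin.snoc g x : Fin (m + 2) → _) ↔ IsCodePrefix g ∧ x = .inr true := by
  rw [IsOpenPrefix, isCodePrefix_snoc, Fin.snoc_last]
  constructor
  · exact fun ⟨⟨hg, _⟩, hx⟩ => ⟨hg, hx⟩
  · rintro ⟨hg, rfl⟩
    simp [hg]

theorem card_isOpenPrefix_snoc (g : Fin (m + 1) → Fin a ⊕ Bool) :
    #{x | IsOpenPrefix (Fin.snoc g x : Fin (m + 2) → _)} =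
      (if IsCode g then 1 else 0) + (if IsOpenPrefix g then 1 else 0) := by
  simp only [isOpenPrefix_snoc]
  by_cases hg : IsCodePrefix g
  · by_cases hlast : g (Fin.last m) = .inr true <;>
      simp [IsCode, IsOpenPrefix, hg, hlast, filter_eq']
  · simp [IsCode, IsOpenPrefix, hg]

theorem numCodes_succ :
    numCodes a (m + 1) = (a + 1) * numCodes a m + a * numOpenPrefixes a m := by
  simp only [numCodes, numOpenPrefixes, card_filter_snoc, card_isCode_snoc, sum_add_distrib,
    ← mul_sum, ← card_filter]

theorem numOpenPrefixes_succ :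
    numOpenPrefixes a (m + 1) = numCodes a m + numOpenPrefixes a m := by
  simp only [numCodes, numOpenPrefixes, card_filter_snoc, card_isOpenPrefix_snoc,
    sum_add_distrib, ← card_filter]

theorem numCodes_eq_morganVoyce (a m : ℕ) : (numCodes a m : ℝ) = a * morganVoyce m a := by
  have hsucc : ∀ m, (numCodes a (m + 1) : ℝ) = a * morganVoyce (m + 1) a ∧
      (numOpenPrefixes a (m + 1) : ℝ) = morganVoyce (m + 1) a - morganVoyce m a := by
    intro m
    induction m with
    | zero =>
      simp only [numCodes_succ, numOpenPrefixes_succ, numCodes_zero, numOpenPrefixes_zero,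
        zero_add, morganVoyce_zero, morganVoyce_one]
      constructor <;> push_cast <;> ring
    | succ m ih =>
      rw [numCodes_succ, numOpenPrefixes_succ (m := m + 1)]
      push_cast
      rw [ih.1, ih.2]
      have hrec : morganVoyce (m + 1 + 1) a + morganVoyce m a = (a + 2) * morganVoyce (m + 1) a :=
        morganVoyce_add_two m a
      exact ⟨by linear_combination (-a : ℝ) * hrec, by linear_combination -hrec⟩
  cases m with
  | zero => simp [numCodes_zero, morganVoyce_zero]
  | succ m => exact (hsucc m).1

theorem numCodes_one_eq_fib (m : ℕ) : numCodes 1 m = Nat.fib (2 * m + 2) := by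
  have hpair : ∀ m,
      numCodes 1 m = Nat.fib (2 * m + 2) ∧ numOpenPrefixes 1 m = Nat.fib (2 * m + 1) := by
    intro m
    induction m with
    | zero => simp [numCodes_zero, numOpenPrefixes_zero]
    | succ m ih =>
      have h3 : Nat.fib (2 * m + 3) = Nat.fib (2 * m + 1) + Nat.fib (2 * m + 2) := Nat.fib_add_two
      have h4 : Nat.fib (2 * m + 4) = Nat.fib (2 * m + 2) + Nat.fib (2 * m + 3) := Nat.fib_add_two
      rw [numCodes_succ, numOpenPrefixes_succ, ih.1, ih.2,
        show 2 * (m + 1) + 2 = 2 * m + 4 by ring, show 2 * (m + 1) + 1 = 2 * m + 3 by ring]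
      omega
  exact (hpair m).1

end FanCode

theorem Relation.exists_rank_of_forall_reflTransGen {α : Type*} {R : α → α → Prop} {r : α}
    (h : ∀ v, ReflTransGen R v r) : ∃ d : α → ℕ, ∀ v ≠ r, ∃ w, R v w ∧ d w < d v := by
  have hlen : ∀ v, ∃ n, ∃ l : List α, l.length = n ∧ (v :: l).IsChain R ∧
      (v :: l).getLast (List.cons_ne_nil _ _) = r := fun v => by
    obtain ⟨l, hl, hlast⟩ := List.exists_isChain_cons_of_relationReflTransGen (h v)
    exact ⟨_, l, rfl, hl, hlast⟩
  refine ⟨fun v => Nat.find (hlen v), fun v hv => ?_⟩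
  obtain ⟨l, hlen_eq, hchain, hlast⟩ := Nat.find_spec (hlen v)
  cases l with
  | nil => exact absurd hlast hv
  | cons w l =>
    rw [List.isChain_cons_cons] at hchain
    refine ⟨w, hchain.1, ?_⟩
    have := Nat.find_min' (hlen w) ⟨l, rfl, hchain.2, by rwa [List.getLast_cons_cons] at hlast⟩
    simp only [List.length_cons] at hlen_eq
    show Nat.find (hlen w) < Nat.find (hlen v)
    omega

namespace WMG

def Joins (G : WMG) (e : G.E) (u v : G.V) : Prop := G.ends e = (u, v) ∨ G.ends e = (v, u)

def AdjVia (G : WMG) (T : Finset G.E) (u v : G.V) : Prop := ∃ e ∈ T, G.Joins e u v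

theorem isSpanningTree_of_reflTransGen (G : WMG) {T : Finset G.E} (r : G.V)
    (hreach : ∀ v, ReflTransGen (G.AdjVia T) v r) (hcard : #T = Fintype.card G.V - 1) :
    G.IsSpanningTree T := by
  have : Std.Symm (G.AdjVia T) := ⟨fun _ _ ⟨e, he, h⟩ => ⟨e, he, h.symm⟩⟩
  exact ⟨fun u v => (hreach u).trans (Std.Symm.symm _ _ (hreach v)), hcard⟩

namespace fanGraph

open FanCode

variable {a m : ℕ}

def hub : (fanGraph (m + 1) a).V := none

def vertex (i : Fin (m + 1)) : (fanGraph (m + 1) a).V := some i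

def pathEdge (k : Fin m) : (fanGraph (m + 1) a).E := Sum.inl k

def hubEdge (i : Fin (m + 1)) (j : Fin a) : (fanGraph (m + 1) a).E := Sum.inr ⟨i, j⟩

@[simp] theorem vertex_inj {i i' : Fin (m + 1)} :
    vertex (a := a) i = vertex i' ↔ i = i' := Option.some_inj

@[simp] theorem vertex_ne_hub (i : Fin (m + 1)) : vertex (a := a) i ≠ hub := Option.some_ne_none i

@[simp] theorem hub_ne_vertex (i : Fin (m + 1)) : hub ≠ vertex (a := a) i :=
  (vertex_ne_hub i).symm

theorem vertex_cases (v : (fanGraph (m + 1) a).V) : v = hub ∨ ∃ i, v = vertex i := by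
  rcases v with _ | i
  exacts [.inl rfl, .inr ⟨i, rfl⟩]

theorem edge_cases (e : (fanGraph (m + 1) a).E) :
    (∃ k, e = pathEdge k) ∨ ∃ i j, e = hubEdge i j := by
  rcases e with k | ⟨i, j⟩
  exacts [.inl ⟨k, rfl⟩, .inr ⟨i, j, rfl⟩]

@[simp] theorem ends_pathEdge (k : Fin m) :
    (fanGraph (m + 1) a).ends (pathEdge k) = (vertex k.castSucc, vertex k.succ) := rfl

@[simp] theorem ends_hubEdge (i : Fin (m + 1)) (j : Fin a) :
    (fanGraph (m + 1) a).ends (hubEdge i j) = (hub, vertex i) := rfl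

theorem card_V : Fintype.card (fanGraph (m + 1) a).V = m + 2 :=
  (Fintype.card_option (α := Fin (m + 1))).trans (by rw [Fintype.card_fin])

noncomputable def tree (f : Fin (m + 1) → Fin a ⊕ Bool) : Finset (fanGraph (m + 1) a).E :=
  disjSum (α := Fin m) (β := Σ _ : Fin (m + 1), Fin a)
    {k | f k.castSucc = .inr true ∨ f k.succ = .inr false} {s | f s.1 = .inl s.2}

variable {f g : Fin (m + 1) → Fin a ⊕ Bool}

@[simp] theorem pathEdge_mem_tree {k : Fin m} :
    pathEdge k ∈ tree f ↔ f k.castSucc = .inr true ∨ f k.succ = .inr false :=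
  inl_mem_disjSum.trans (by simp)

@[simp] theorem hubEdge_mem_tree {i : Fin (m + 1)} {j : Fin a} :
    hubEdge i j ∈ tree f ↔ f i = .inl j :=
  inr_mem_disjSum.trans (by simp)

theorem card_tree (hf : IsCode f) : #(tree f) = m + 1 := by
  calc #(tree f)
      = ∑ k : Fin m, (if f k.castSucc = .inr true ∨ f k.succ = .inr false then 1 else 0) +
          ∑ i, ∑ j : Fin a, (if f i = .inl j then 1 else 0) := by
        rw [show #(tree f) = _ from card_disjSum _ _, card_filter, card_filter,
          Fintype.sum_sigma]
    _ = ∑ k : Fin m, (if f k.castSucc = .inr true then 1 else 0) +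
          ∑ k : Fin m, (if f k.succ = .inr false then 1 else 0) +
          ∑ i, ∑ j : Fin a, (if f i = .inl j then 1 else 0) := by
        rw [← sum_add_distrib]
        congr 1
        refine sum_congr rfl fun k _ => ?_
        have := hf.1.2 k
        by_cases h1 : f k.castSucc = .inr true <;> by_cases h2 : f k.succ = .inr false <;>
          simp_all
    _ = ∑ i, (if f i = .inr true then 1 else 0) + ∑ i, (if f i = .inr false then 1 else 0) +
          ∑ i, ∑ j : Fin a, (if f i = .inl j then 1 else 0) := by
        rw [Fin.sum_univ_castSucc (f := fun i => if f i = .inr true then 1 else 0),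
          Fin.sum_univ_succ (f := fun i => if f i = .inr false then 1 else 0)]
        simp [hf.2, hf.1.1]
    _ = ∑ _ : Fin (m + 1), 1 := by
        rw [← sum_add_distrib, ← sum_add_distrib]
        exact sum_congr rfl fun i _ => by rcases f i with j | _ | _ <;> simp
    _ = m + 1 := by simp

theorem adjVia_tree_hub {i : Fin (m + 1)} {j : Fin a} (h : f i = .inl j) :
    (fanGraph (m + 1) a).AdjVia (tree f) (vertex i) hub :=
  ⟨hubEdge i j, hubEdge_mem_tree.2 h, .inr rfl⟩

theorem adjVia_tree_right {k : Fin m} (h : f k.castSucc = .inr true) :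
    (fanGraph (m + 1) a).AdjVia (tree f) (vertex k.castSucc) (vertex k.succ) :=
  ⟨pathEdge k, pathEdge_mem_tree.2 (.inl h), .inl rfl⟩

theorem adjVia_tree_left {k : Fin m} (h : f k.succ = .inr false) :
    (fanGraph (m + 1) a).AdjVia (tree f) (vertex k.succ) (vertex k.castSucc) :=
  ⟨pathEdge k, pathEdge_mem_tree.2 (.inr h), .inr rfl⟩

theorem reflTransGen_tree_of_ne_left (hf : IsCode f) {i : Fin (m + 1)} (hi : f i ≠ .inr false) :
    ReflTransGen ((fanGraph (m + 1) a).AdjVia (tree f)) (vertex i) hub := by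
  induction i using Fin.reverseInduction with
  | last =>
    rcases h : f (Fin.last m) with j | _ | _
    exacts [.single (adjVia_tree_hub h), absurd h hi, absurd h hf.2]
  | cast k ih =>
    rcases h : f k.castSucc with j | _ | _
    · exact .single (adjVia_tree_hub h)
    · exact absurd h hi
    · exact .head (adjVia_tree_right h) (ih fun hL => hf.1.2 k ⟨h, hL⟩)

theorem reflTransGen_tree_of_ne_right (hf : IsCode f) {i : Fin (m + 1)} (hi : f i ≠ .inr true) :
    ReflTransGen ((fanGraph (m + 1) a).AdjVia (tree f)) (vertex i) hub := by
  induction i using Fin.induction with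
  | zero =>
    rcases h : f 0 with j | _ | _
    exacts [.single (adjVia_tree_hub h), absurd h hf.1.1, absurd h hi]
  | succ k ih =>
    rcases h : f k.succ with j | _ | _
    · exact .single (adjVia_tree_hub h)
    · exact .head (adjVia_tree_left h) (ih fun hR => hf.1.2 k ⟨hR, h⟩)
    · exact absurd h hi

theorem isSpanningTree_tree (hf : IsCode f) : (fanGraph (m + 1) a).IsSpanningTree (tree f) := by
  refine isSpanningTree_of_reflTransGen _ hub (fun v => ?_) ?_
  · obtain rfl | ⟨i, rfl⟩ := vertex_cases v
    · exact .refl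
    · by_cases hi : f i = .inr true
      · exact reflTransGen_tree_of_ne_left hf (by simp [hi])
      · exact reflTransGen_tree_of_ne_right hf hi
  · rw [card_tree hf, card_V]
    rfl

theorem not_right_left_of_tree_eq (hf : IsCode f) (hfg : tree f = tree g) (i : Fin (m + 1)) :
    ¬(f i = .inr true ∧ g i = .inr false) := by
  induction i using Fin.reverseInduction with
  | last => exact fun h => hf.2 h.1
  | cast k ih =>
    rintro ⟨hR, hL⟩
    have hk : pathEdge k ∈ tree g := hfg ▸ pathEdge_mem_tree.2 (.inl hR)
    have hgL : g k.succ = .inr false := (pathEdge_mem_tree.1 hk).resolve_left (by simp [hL])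
    refine ih ⟨?_, hgL⟩
    rcases h : f k.succ with j | _ | _
    · have := hubEdge_mem_tree.1 (hfg ▸ hubEdge_mem_tree.2 h)
      simp [hgL] at this
    · exact absurd ⟨hR, h⟩ (hf.1.2 k)
    · rfl

theorem eq_of_tree_eq (hf : IsCode f) (hg : IsCode g) (hfg : tree f = tree g) : f = g := by
  have hinl : ∀ {f g : Fin (m + 1) → Fin a ⊕ Bool}, tree f = tree g →
      ∀ {i j}, f i = .inl j → g i = .inl j := fun hfg _ _ h =>
    hubEdge_mem_tree.1 (hfg ▸ hubEdge_mem_tree.2 h)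
  funext i
  rcases hfi : f i with j | b
  · exact (hinl hfg hfi).symm
  rcases hgi : g i with j | b'
  · simpa [hfi] using hinl hfg.symm hgi
  cases b <;> cases b'
  · rfl
  · exact absurd ⟨hgi, hfi⟩ (not_right_left_of_tree_eq hg hfg.symm i)
  · exact absurd ⟨hfi, hgi⟩ (not_right_left_of_tree_eq hf hfg i)
  · rfl

def letterAt (i : Fin (m + 1)) : (fanGraph (m + 1) a).E → Fin a ⊕ Bool :=
  Sum.elim (α := Fin m) (β := Σ _ : Fin (m + 1), Fin a)
    (fun k => .inr (decide (k.castSucc = i))) (fun s => .inl s.2)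

@[simp] theorem letterAt_pathEdge (i : Fin (m + 1)) (k : Fin m) :
    letterAt i (pathEdge (a := a) k) = .inr (decide (k.castSucc = i)) := rfl

@[simp] theorem letterAt_hubEdge (i i' : Fin (m + 1)) (j : Fin a) :
    letterAt i (hubEdge i' j) = .inl j := rfl

section Letters

variable {e : (fanGraph (m + 1) a).E} {i : Fin (m + 1)} {w : (fanGraph (m + 1) a).V}

theorem eq_hubEdge_of_letterAt_eq {j : Fin a} (he : (fanGraph (m + 1) a).Joins e (vertex i) w)
    (h : letterAt i e = .inl j) : e = hubEdge i j := by
  rcases edge_cases e with ⟨k, rfl⟩ | ⟨i', j', rfl⟩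
  · simp at h
  · simp only [letterAt_hubEdge, Sum.inl.injEq, Joins, ends_hubEdge, Prod.mk.injEq,
      hub_ne_vertex, false_and, vertex_inj, false_or] at h he
    rw [he.2, h]

theorem exists_pathEdge_of_letterAt_eq_right (he : (fanGraph (m + 1) a).Joins e (vertex i) w)
    (h : letterAt i e = .inr true) :
    ∃ k, e = pathEdge k ∧ k.castSucc = i ∧ w = vertex k.succ := by
  rcases edge_cases e with ⟨k, rfl⟩ | ⟨i', j', rfl⟩
  · simp only [letterAt_pathEdge, Sum.inr.injEq, decide_eq_true_eq, Joins, ends_pathEdge,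
      Prod.mk.injEq, vertex_inj] at h he
    rcases he with ⟨-, hw⟩ | ⟨-, hs⟩
    · exact ⟨k, rfl, h, hw.symm⟩
    · exact absurd (h.trans hs.symm) (Fin.castSucc_lt_succ (i := k)).ne
  · simp at h

theorem exists_pathEdge_of_letterAt_eq_left (he : (fanGraph (m + 1) a).Joins e (vertex i) w)
    (h : letterAt i e = .inr false) :
    ∃ k, e = pathEdge k ∧ k.succ = i ∧ w = vertex k.castSucc := by
  rcases edge_cases e with ⟨k, rfl⟩ | ⟨i', j', rfl⟩
  · simp only [letterAt_pathEdge, Sum.inr.injEq, decide_eq_false_iff_not, Joins, ends_pathEdge,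
      Prod.mk.injEq, vertex_inj] at h he
    rcases he with ⟨hc, -⟩ | ⟨hw, hs⟩
    · exact absurd hc h
    · exact ⟨k, rfl, hs, hw.symm⟩
  · simp at h

theorem eq_pathEdge_of_letterAt_castSucc {k : Fin m}
    (he : (fanGraph (m + 1) a).Joins e (vertex k.castSucc) w)
    (h : letterAt k.castSucc e = .inr true) : e = pathEdge k ∧ w = vertex k.succ := by
  obtain ⟨k', rfl, hk, hw⟩ := exists_pathEdge_of_letterAt_eq_right he h
  obtain rfl := Fin.castSucc_injective _ hk
  exact ⟨rfl, hw⟩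

theorem eq_pathEdge_of_letterAt_succ {k : Fin m}
    (he : (fanGraph (m + 1) a).Joins e (vertex k.succ) w)
    (h : letterAt k.succ e = .inr false) : e = pathEdge k ∧ w = vertex k.castSucc := by
  obtain ⟨k', rfl, hk, hw⟩ := exists_pathEdge_of_letterAt_eq_left he h
  obtain rfl := Fin.succ_injective _ hk
  exact ⟨rfl, hw⟩

end Letters

section Parents

variable {e : Fin (m + 1) → (fanGraph (m + 1) a).E} {w : Fin (m + 1) → (fanGraph (m + 1) a).V}

theorem isCode_letterAt {d : (fanGraph (m + 1) a).V → ℕ}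
    (he : ∀ i, (fanGraph (m + 1) a).Joins (e i) (vertex i) (w i))
    (hd : ∀ i, d (w i) < d (vertex i)) : IsCode fun i => letterAt i (e i) := by
  refine ⟨⟨fun h => ?_, fun k ⟨hR, hL⟩ => ?_⟩, fun h => ?_⟩
  · obtain ⟨k, -, hk, -⟩ := exists_pathEdge_of_letterAt_eq_left (he 0) h
    exact Fin.succ_ne_zero k hk
  · have h1 := (eq_pathEdge_of_letterAt_castSucc (he _) hR).2 ▸ hd k.castSucc
    have h2 := (eq_pathEdge_of_letterAt_succ (he _) hL).2 ▸ hd k.succ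
    omega
  · obtain ⟨k, -, hk, -⟩ := exists_pathEdge_of_letterAt_eq_right (he _) h
    exact Fin.castSucc_ne_last k hk

theorem tree_letterAt_subset (he : ∀ i, (fanGraph (m + 1) a).Joins (e i) (vertex i) (w i)) :
    tree (fun i => letterAt i (e i)) ⊆ univ.image e := by
  intro x hx
  obtain ⟨k, rfl⟩ | ⟨i, j, rfl⟩ := edge_cases x
  · rcases pathEdge_mem_tree.1 hx with h | h
    · exact mem_image.2 ⟨_, mem_univ _, (eq_pathEdge_of_letterAt_castSucc (he _) h).1⟩
    · exact mem_image.2 ⟨_, mem_univ _, (eq_pathEdge_of_letterAt_succ (he _) h).1⟩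
  · exact mem_image.2 ⟨i, mem_univ _, eq_hubEdge_of_letterAt_eq (he i) (hubEdge_mem_tree.1 hx)⟩

end Parents

/- Orient `T` towards the hub by a function `d` that decreases along `T`; the edges by which the
path vertices descend spell a code, whose tree lies in `T` and has as many edges. -/
theorem exists_isCode_tree_eq {T : Finset (fanGraph (m + 1) a).E}
    (hT : (fanGraph (m + 1) a).IsSpanningTree T) : ∃ f, IsCode f ∧ tree f = T := by
  obtain ⟨d, hd⟩ := exists_rank_of_forall_reflTransGen (R := (fanGraph (m + 1) a).AdjVia T)
    (r := hub) fun v => hT.1 v hub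
  have hparent : ∀ i, ∃ w e, e ∈ T ∧ (fanGraph (m + 1) a).Joins e (vertex i) w ∧
      d w < d (vertex i) := fun i => by
    obtain ⟨w, ⟨e, he, hj⟩, hlt⟩ := hd (vertex i) (vertex_ne_hub i)
    exact ⟨w, e, he, hj, hlt⟩
  choose w e heT hej hlt using hparent
  have hcode := isCode_letterAt hej hlt
  refine ⟨_, hcode, eq_of_subset_of_card_le (fun x hx => ?_) ?_⟩
  · obtain ⟨i, -, rfl⟩ := mem_image.1 (tree_letterAt_subset hej hx)
    exact heT i
  · rw [hT.2, card_tree hcode, card_V]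
    rfl

theorem t_eq_numCodes (a m : ℕ) : (fanGraph (m + 1) a).t = numCodes a m := by
  rw [t, numCodes, ← Fintype.card_subtype, ← Nat.card_eq_fintype_card]
  refine (Nat.card_congr (Equiv.ofBijective
    (fun f : {f // IsCode f} => ⟨tree f.1, isSpanningTree_tree f.2⟩) ⟨?_, ?_⟩)).symm
  · exact fun f g h => Subtype.ext (eq_of_tree_eq f.2 g.2 (congrArg Subtype.val h))
  · rintro ⟨T, hT⟩
    obtain ⟨f, hf, rfl⟩ := exists_isCode_tree_eq hT
    exact ⟨⟨f, hf⟩, rfl⟩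

end fanGraph

end WMG

theorem spanning_trees_of_fan_general (n a : ℕ) (hn : 2 ≤ n) :
    ((WMG.fanGraph n a).t : ℝ) = (a : ℝ) * morganVoyce (n - 1) (a : ℝ) ∧
    (WMG.fanGraph n 1).t = Nat.fib (2 * n) := by
  obtain ⟨m, rfl⟩ : ∃ m, n = m + 1 := ⟨n - 1, by omega⟩
  rw [WMG.fanGraph.t_eq_numCodes, WMG.fanGraph.t_eq_numCodes, FanCode.numCodes_eq_morganVoyce,
    FanCode.numCodes_one_eq_fib]
  exact ⟨rfl, rfl⟩

/-- For integers `a ≥ 1` and `n ≥ 2`, the modified fan graph satisfies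
`t(F̄an_n) = a ⬝ B_{n-1}(a)` where `B_m` is the `m`-th Morgan–Voyce polynomial;
in particular `t(Fan_n) = F_{2n}` (the `2n`-th Fibonacci number). -/
theorem spanning_trees_of_fan (n a : ℕ) (hn : 2 ≤ n) (ha : 1 ≤ a) :
    ((WMG.fanGraph n a).t : ℝ) = (a : ℝ) * morganVoyce (n - 1) (a : ℝ) ∧
    (WMG.fanGraph n 1).t = Nat.fib (2 * n) :=
  spanning_trees_of_fan_general n a hn
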